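/- arXiv:0806.1879 — 2 statements merged into one kernel-verified Lean document; each statement's English description precedes it below -/
import Mathlib

section
/- If two skew diagrams λ/μ and α/β have equal skew Schur functions, then they have the same multiset of row lengths (parts). -/
open YoungDiagram
open scoped Classical

namespace LRSkew

/-- The cells of the skew diagram `lam/mu`. -/
def skewCells (lam mu : YoungDiagram) : Finset (ℕ × ℕ) := lam.cells \ mu.cells

/-- A semistandard filling of the skew shape `lam/mu`: entries are positive exactly on the
cells of the shape, rows are weakly increasing and columns are strictly increasing. -/
def IsSSYT (lam mu : YoungDiagram) (T : ℕ × ℕ → ℕ) : Prop :=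
  (∀ p, p ∈ skewCells lam mu ↔ T p ≠ 0) ∧
  (∀ i j1 j2, (i, j1) ∈ skewCells lam mu → (i, j2) ∈ skewCells lam mu → j1 ≤ j2 →
    T (i, j1) ≤ T (i, j2)) ∧
  (∀ i1 i2 j, (i1, j) ∈ skewCells lam mu → (i2, j) ∈ skewCells lam mu → i1 < i2 →
    T (i1, j) < T (i2, j))

/-- The number of entries equal to `k` among the cells read (in the reverse reading word:
right to left along rows, top row first) up to position `(i,j)`. -/
def prefixCount (lam mu : YoungDiagram) (T : ℕ × ℕ → ℕ) (i j k : ℕ) : ℕ :=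
  ((skewCells lam mu).filter fun p => (p.1 < i ∨ (p.1 = i ∧ j ≤ p.2)) ∧ T p = k).card

/-- The reverse reading word of the filling is a lattice word. -/
def IsLattice (lam mu : YoungDiagram) (T : ℕ × ℕ → ℕ) : Prop :=
  ∀ i j k, prefixCount lam mu T i j (k + 2) ≤ prefixCount lam mu T i j (k + 1)

/-- The number of entries of the filling equal to `k`. -/
def content (lam mu : YoungDiagram) (T : ℕ × ℕ → ℕ) (k : ℕ) : ℕ :=
  ((skewCells lam mu).filter fun p => T p = k).card

/-- A Littlewood–Richardson tableau of shape `lam/mu` and content `nu`. -/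
def IsLR (lam mu nu : YoungDiagram) (T : ℕ × ℕ → ℕ) : Prop :=
  IsSSYT lam mu T ∧ IsLattice lam mu T ∧ ∀ i, content lam mu T (i + 1) = nu.rowLen i

/-- The Littlewood–Richardson coefficient `c(lam; mu, nu)`. -/
noncomputable def lrCoeff (lam mu nu : YoungDiagram) : ℕ :=
  if mu ≤ lam then {T : ℕ × ℕ → ℕ | IsLR lam mu nu T}.ncard else 0

/-- Equality of the skew Schur functions `s_{lam/mu} = s_{alp/bet}`, expressed through
their expansions into Schur functions. -/
def SchurEq (lam mu alp bet : YoungDiagram) : Prop :=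
  ∀ nu : YoungDiagram, lrCoeff lam mu nu = lrCoeff alp bet nu

/-- The rectangular Young diagram `(k^l)` with `l` rows of length `k`. -/
def rect (k l : ℕ) : YoungDiagram :=
  ⟨Finset.range l ×ˢ Finset.range k, by
    intro a b hba ha
    simp only [Finset.coe_product, Set.mem_prod, Finset.mem_coe, Finset.mem_range] at ha ⊢
    exact ⟨lt_of_le_of_lt hba.1 ha.1, lt_of_le_of_lt hba.2 ha.2⟩⟩

/-- The complement of `nu` in the rectangle `(k^l)`, rotated by 180 degrees so that it is
again a partition: its parts are `(k - nu_l, …, k - nu_1)`. -/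
def complRect (k l : ℕ) (nu : YoungDiagram) : YoungDiagram :=
  ⟨(rect k l).cells.filter fun p => (l - 1 - p.1, k - 1 - p.2) ∉ nu, by
    intro a b hba ha
    simp only [Finset.coe_filter, Set.mem_setOf_eq, mem_cells] at ha ⊢
    refine ⟨(rect k l).isLowerSet hba ha.1, fun hmem => ha.2 ?_⟩
    exact nu.isLowerSet
      (Prod.mk_le_mk.mpr ⟨Nat.sub_le_sub_left hba.1 _, Nat.sub_le_sub_left hba.2 _⟩) hmem⟩

/-- The staircase partition `(n, n-1, …, 2, 1)`. -/
def staircase (n : ℕ) : YoungDiagram :=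
  ⟨(Finset.range n ×ˢ Finset.range n).filter fun p => p.1 + p.2 < n, by
    intro a b hba ha
    simp only [Finset.coe_filter, Set.mem_setOf_eq, Finset.mem_product, Finset.mem_range] at ha ⊢
    exact ⟨⟨lt_of_le_of_lt hba.1 ha.1.1, lt_of_le_of_lt hba.2 ha.1.2⟩,
      lt_of_le_of_lt (Nat.add_le_add hba.1 hba.2) ha.2⟩⟩

/-- A basic skew diagram: no empty rows and no empty columns. -/
def IsBasic (lam mu : YoungDiagram) : Prop :=
  (∀ i, i < lam.colLen 0 → mu.rowLen i < lam.rowLen i) ∧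
  (∀ j, j < lam.rowLen 0 → mu.colLen j < lam.colLen j)

/-- A (basic) skew diagram is connected iff consecutive rows share a column. -/
def IsConnectedSkew (lam mu : YoungDiagram) : Prop :=
  ∀ i, i + 1 < lam.colLen 0 → mu.rowLen i < lam.rowLen (i + 1)

/-- The number of distinct (positive) part sizes of a partition. -/
def dp (lam : YoungDiagram) : ℕ :=
  ((Finset.range (lam.colLen 0)).image fun i => lam.rowLen i).card

/-- A partition is a rectangle: all its parts are equal. -/
def IsRect (mu : YoungDiagram) : Prop :=
  ∀ i, i < mu.colLen 0 → mu.rowLen i = mu.rowLen 0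

/-- Cells of a skew diagram in the same connected component: the reflexive–transitive
closure of sharing a row or a column. -/
def SameComp (s : Finset (ℕ × ℕ)) : ℕ × ℕ → ℕ × ℕ → Prop :=
  Relation.ReflTransGen fun a b => a ∈ s ∧ b ∈ s ∧ (a.1 = b.1 ∨ a.2 = b.2)

/-- Two finite sets of boxes agree up to translation or 180°-rotation of each connected
component independently. -/
def UpToTransRot (s t : Finset (ℕ × ℕ)) : Prop :=
  ∃ f : ℕ × ℕ → ℕ × ℕ, Set.BijOn f ↑s ↑t ∧
    ∀ p ∈ s, ∀ q ∈ s, SameComp s p q →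
      (((f q).1 : ℤ) - (f p).1 = (q.1 : ℤ) - p.1 ∧ ((f q).2 : ℤ) - (f p).2 = (q.2 : ℤ) - p.2) ∨
      (((f q).1 : ℤ) - (f p).1 = (p.1 : ℤ) - q.1 ∧ ((f q).2 : ℤ) - (f p).2 = (p.2 : ℤ) - q.2)



/-!
For a skew shape `λ/μ` let `G(k) = ∑ᵢ min (λᵢ - μᵢ) k`, the number of cells in the first `k`
columns once the rows are left-justified. Its increments `G(k+1) - G(k)` count the rows longer
than `k`, so `G` determines the multiset of row lengths; we show that `G` is determined by the
Schur expansion of `s_{λ/μ}`.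

If `T` is an LR tableau of shape `λ/μ` and content `ν`, give each cell its reading rank: the
number of occurrences of its entry read so far in the reverse reading word. The lattice
condition makes ranks strictly decrease along each row, so a row holds at most
`min (λᵢ - μᵢ) k` cells of rank `≤ k`, while each entry `v + 1` occurs on at least `min νᵥ k`
of them. Hence `∑ᵥ min νᵥ k ≤ G(k)` whenever `c(λ; μ, ν) ≠ 0`. Equality is attained by the
filling that numbers the cells at each fixed distance from the right ends of the rows
`1, 2, 3, …` from top to bottom: it is an LR tableau whose content is the sorted list of row
lengths. So `G(k)` is the minimum of `∑ᵥ min νᵥ k` over the `ν` with `c(λ; μ, ν) ≠ 0`.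
-/

open Finset Nat

section Counting

variable {α : Type*} {s : Finset α} {f : α → ℕ}

theorem min_card_le_card_filter_le (hf : Set.InjOn f s) (hle : ∀ x ∈ s, f x ≤ #s) (k : ℕ) :
    min #s k ≤ #{x ∈ s | f x ≤ k} := by
  have hgt : #{x ∈ s | ¬f x ≤ k} ≤ #(Ioc k #s) :=
    card_le_card_of_injOn f
      (fun x hx => by
        simp only [mem_coe, mem_filter] at hx
        simpa using ⟨not_le.mp hx.2, hle x hx.1⟩)
      (hf.mono fun x hx => (mem_filter.mp hx).1)
  have hsplit := card_filter_add_card_filter_not (s := s) (fun x => f x ≤ k)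
  rw [Nat.card_Ioc] at hgt
  omega

theorem card_filter_le_le (hf : Set.InjOn f s) (hpos : ∀ x ∈ s, 0 < f x) (k : ℕ) :
    #{x ∈ s | f x ≤ k} ≤ k := by
  simpa using card_le_card_of_injOn f (t := Icc 1 k)
    (fun x hx => by
      simp only [mem_coe, mem_filter] at hx
      simpa using ⟨hpos x hx.1, hx.2⟩)
    (hf.mono fun x hx => (mem_filter.mp hx).1)

theorem nth_mem_of_lt_count {p : ℕ → Prop} [DecidablePred p] {k n : ℕ} (h : k < count p n) :
    p (nth p k) :=
  nth_mem k fun hf => h.trans_le (count_le_card hf n)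

theorem count_nth_of_lt_count {p : ℕ → Prop} [DecidablePred p] {k n : ℕ} (h : k < count p n) :
    count p (nth p k) = k :=
  count_nth fun hf => h.trans_le (count_le_card hf n)

end Counting

theorem rowLen_bot (i : ℕ) : (⊥ : YoungDiagram).rowLen i = 0 :=
  Nat.eq_zero_of_not_pos fun h => notMem_bot _ (mem_iff_lt_rowLen.mpr h)

section

variable {lam mu : YoungDiagram}

theorem mem_skewCells_iff {p : ℕ × ℕ} :
    p ∈ skewCells lam mu ↔ mu.rowLen p.1 ≤ p.2 ∧ p.2 < lam.rowLen p.1 := by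
  obtain ⟨i, j⟩ := p
  simp only [skewCells, mem_sdiff, mem_cells, mem_iff_lt_rowLen]
  omega

theorem lt_colLen_of_pos_rowLen {i : ℕ} (h : 0 < lam.rowLen i) : i < lam.colLen 0 :=
  mem_iff_lt_colLen.mp (mem_iff_lt_rowLen.mpr h)

theorem fst_lt_colLen_of_mem_skewCells {p : ℕ × ℕ} (hp : p ∈ skewCells lam mu) :
    p.1 < lam.colLen 0 :=
  lt_colLen_of_pos_rowLen (by have := mem_skewCells_iff.mp hp; omega)

theorem card_skewCells_row_le (i : ℕ) :
    #{p ∈ skewCells lam mu | p.1 = i} ≤ lam.rowLen i - mu.rowLen i := by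
  simpa using card_le_card_of_injOn Prod.snd (t := Ico (mu.rowLen i) (lam.rowLen i))
    (fun p hp => by
      simp only [mem_coe, mem_filter] at hp
      obtain ⟨hp, rfl⟩ := hp
      simpa using mem_skewCells_iff.mp hp)
    (fun p hp q hq hpq => by
      simp only [mem_coe, mem_filter] at hp hq
      exact Prod.ext (hp.2.trans hq.2.symm) hpq)

/-- `p` is read strictly before `q` in the reverse reading word (rows top to bottom, each row
right to left). -/
def ReadBefore (p q : ℕ × ℕ) : Prop :=
  p.1 < q.1 ∨ p.1 = q.1 ∧ q.2 < p.2

theorem ReadBefore.total_of_ne {p q : ℕ × ℕ} (h : p ≠ q) : ReadBefore p q ∨ ReadBefore q p := by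
  have := Prod.ext_iff.not.mp h
  unfold ReadBefore
  omega

section ReadingRank

variable {T : ℕ × ℕ → ℕ}

theorem prefixCount_lt_prefixCount {p q : ℕ × ℕ} {k : ℕ} (hq : q ∈ skewCells lam mu)
    (hTq : T q = k) (hpq : ReadBefore p q) :
    prefixCount lam mu T p.1 p.2 k < prefixCount lam mu T q.1 q.2 k := by
  unfold ReadBefore at hpq
  refine card_lt_card ((ssubset_iff_of_subset fun x hx => ?_).mpr ⟨q, ?_, ?_⟩)
  · simp only [mem_filter] at hx ⊢
    exact ⟨hx.1, by omega, hx.2.2⟩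
  · simp [hq, hTq]
  · simp only [mem_filter, not_and]
    omega

theorem prefixCount_anti (hlat : IsLattice lam mu T) (i j : ℕ) {u w : ℕ} (hu : u ≠ 0)
    (huw : u ≤ w) : prefixCount lam mu T i j w ≤ prefixCount lam mu T i j u := by
  obtain ⟨a, rfl⟩ := exists_eq_add_one_of_ne_zero hu
  obtain ⟨b, rfl⟩ : ∃ b, w = b + 1 := ⟨w - 1, by omega⟩
  exact antitone_nat_of_succ_le (f := fun n => prefixCount lam mu T i j (n + 1))
    (fun n => hlat i j n) (by omega : a ≤ b)

def readingRank (lam mu : YoungDiagram) (T : ℕ × ℕ → ℕ) (p : ℕ × ℕ) : ℕ :=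
  prefixCount lam mu T p.1 p.2 (T p)

theorem readingRank_pos {p : ℕ × ℕ} (hp : p ∈ skewCells lam mu) : 0 < readingRank lam mu T p :=
  card_pos.mpr ⟨p, by simp [hp]⟩

theorem readingRank_le_content (p : ℕ × ℕ) :
    readingRank lam mu T p ≤ content lam mu T (T p) :=
  card_le_card fun _ hx => by
    simp only [mem_filter] at hx ⊢
    exact ⟨hx.1, hx.2.2⟩

theorem readingRank_lt_of_readBefore {p q : ℕ × ℕ} (hq : q ∈ skewCells lam mu) (hpq : T p = T q)
    (h : ReadBefore p q) : readingRank lam mu T p < readingRank lam mu T q := by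
  unfold readingRank
  rw [hpq]
  exact prefixCount_lt_prefixCount hq rfl h

theorem readingRank_injOn_value (w : ℕ) :
    Set.InjOn (readingRank lam mu T) ((skewCells lam mu).filter (T · = w) : Set (ℕ × ℕ)) := by
  intro p hp q hq hrank
  simp only [mem_coe, mem_filter] at hp hq
  by_contra hne
  rcases ReadBefore.total_of_ne hne with h | h
  · exact (readingRank_lt_of_readBefore hq.1 (hp.2.trans hq.2.symm) h).ne hrank
  · exact (readingRank_lt_of_readBefore hp.1 (hq.2.trans hp.2.symm) h).ne hrank.symm

variable (hT : IsSSYT lam mu T) (hlat : IsLattice lam mu T)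
include hT hlat

theorem readingRank_lt_of_snd_lt {p q : ℕ × ℕ} (hp : p ∈ skewCells lam mu)
    (hq : q ∈ skewCells lam mu) (hrow : p.1 = q.1) (hlt : p.2 < q.2) :
    readingRank lam mu T q < readingRank lam mu T p := by
  have hTpq : T p ≤ T q := by
    obtain ⟨i, j⟩ := p
    obtain ⟨i', j'⟩ := q
    obtain rfl : i = i' := hrow
    exact hT.2.1 i j j' hp hq hlt.le
  calc readingRank lam mu T q ≤ prefixCount lam mu T q.1 q.2 (T p) :=
        prefixCount_anti hlat _ _ ((hT.1 p).mp hp) hTpq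
    _ < readingRank lam mu T p :=
        prefixCount_lt_prefixCount hp rfl (Or.inr ⟨hrow.symm, hlt⟩)

theorem readingRank_injOn_row (i : ℕ) :
    Set.InjOn (readingRank lam mu T) ((skewCells lam mu).filter (·.1 = i) : Set (ℕ × ℕ)) := by
  intro p hp q hq hrank
  simp only [mem_coe, mem_filter] at hp hq
  have hrow : p.1 = q.1 := hp.2.trans hq.2.symm
  rcases lt_trichotomy p.2 q.2 with h | h | h
  · exact absurd hrank (readingRank_lt_of_snd_lt hT hlat hp.1 hq.1 hrow h).ne'
  · exact Prod.ext hrow h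
  · exact absurd hrank (readingRank_lt_of_snd_lt hT hlat hq.1 hp.1 hrow.symm h).ne

end ReadingRank

def truncRowSum (lam mu : YoungDiagram) (k : ℕ) : ℕ :=
  ∑ i ∈ range (lam.colLen 0), min (lam.rowLen i - mu.rowLen i) k

theorem truncRowSum_le_of_isLR {nu : YoungDiagram} {T : ℕ × ℕ → ℕ} (hT : IsLR lam mu nu T)
    (k : ℕ) : truncRowSum nu ⊥ k ≤ truncRowSum lam mu k := by
  obtain ⟨hssyt, hlat, hcont⟩ := hT
  set A := (skewCells lam mu).filter (readingRank lam mu T · ≤ k)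
  calc truncRowSum nu ⊥ k
      = ∑ v ∈ range (nu.colLen 0), min (content lam mu T (v + 1)) k := by
        simp only [truncRowSum, rowLen_bot, Nat.sub_zero, hcont]
    _ ≤ ∑ v ∈ range (nu.colLen 0), #(A.filter (T · = v + 1)) := by
        refine sum_le_sum fun v _ => ?_
        rw [filter_comm]
        refine min_card_le_card_filter_le (readingRank_injOn_value (v + 1)) (fun p hp => ?_) k
        rw [← (mem_filter.mp hp).2]
        exact readingRank_le_content p
    _ ≤ ∑ v ∈ range (nu.colLen 0 + 1), #(A.filter (T · = v)) := by
        rw [sum_range_succ']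
        exact le_add_right le_rfl
    _ ≤ #A := by
        rw [sum_card_fiberwise_eq_card_filter]
        exact card_filter_le _ _
    _ = ∑ i ∈ range (lam.colLen 0), #(A.filter (·.1 = i)) :=
        card_eq_sum_card_fiberwise fun p hp =>
          mem_range.mpr (fst_lt_colLen_of_mem_skewCells (mem_filter.mp hp).1)
    _ ≤ truncRowSum lam mu k := by
        refine sum_le_sum fun i _ => le_min ?_ ?_
        · exact (card_le_card (filter_subset_filter _ (filter_subset _ _))).trans
            (card_skewCells_row_le i)
        · rw [filter_comm]
          exact card_filter_le_le (readingRank_injOn_row hssyt hlat i)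
            (fun p hp => readingRank_pos (mem_filter.mp hp).1) k

def RowLongerThan (lam mu : YoungDiagram) (c i : ℕ) : Prop :=
  c < lam.rowLen i - mu.rowLen i

instance (c : ℕ) : DecidablePred (RowLongerThan lam mu c) := fun _ => Nat.decLt _ _

theorem RowLongerThan.anti {c d i : ℕ} (hcd : c ≤ d) (h : RowLongerThan lam mu d i) :
    RowLongerThan lam mu c i :=
  lt_of_le_of_lt hcd h

theorem RowLongerThan.lt_colLen {c i : ℕ} (h : RowLongerThan lam mu c i) : i < lam.colLen 0 :=
  lt_colLen_of_pos_rowLen (by unfold RowLongerThan at h; omega)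

theorem RowLongerThan.lt_rowLen_zero {c i : ℕ} (h : RowLongerThan lam mu c i) :
    c < lam.rowLen 0 := by
  have := lam.rowLen_anti 0 i (Nat.zero_le i)
  unfold RowLongerThan at h
  omega

/-- 0-based distance of `p` from the right end of its row in `λ`. -/
def distToRowEnd (lam : YoungDiagram) (p : ℕ × ℕ) : ℕ :=
  lam.rowLen p.1 - 1 - p.2

theorem rowLongerThan_distToRowEnd {p : ℕ × ℕ} (hp : p ∈ skewCells lam mu) :
    RowLongerThan lam mu (distToRowEnd lam p) p.1 := by
  have := mem_skewCells_iff.mp hp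
  unfold RowLongerThan distToRowEnd
  omega

/-- The cells at distance `c` from the right ends of their rows, read from top to bottom, are
numbered `1, 2, 3, …`. -/
def canonicalFilling (lam mu : YoungDiagram) (p : ℕ × ℕ) : ℕ :=
  if p ∈ skewCells lam mu then count (RowLongerThan lam mu (distToRowEnd lam p)) p.1 + 1 else 0

theorem canonicalFilling_of_mem {p : ℕ × ℕ} (hp : p ∈ skewCells lam mu) :
    canonicalFilling lam mu p = count (RowLongerThan lam mu (distToRowEnd lam p)) p.1 + 1 :=
  if_pos hp

/-- The cell at distance `c` from the right end of the `(w+1)`-st row of `λ/μ` longer than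
`c`. -/
noncomputable def canonicalCell (lam mu : YoungDiagram) (c w : ℕ) : ℕ × ℕ :=
  (nth (RowLongerThan lam mu c) w, lam.rowLen (nth (RowLongerThan lam mu c) w) - 1 - c)

theorem canonicalCell_spec {c w n : ℕ} (h : w < count (RowLongerThan lam mu c) n) :
    canonicalCell lam mu c w ∈ skewCells lam mu ∧ distToRowEnd lam (canonicalCell lam mu c w) = c ∧
      canonicalFilling lam mu (canonicalCell lam mu c w) = w + 1 ∧
      (canonicalCell lam mu c w).1 < n := by
  have hrow : c < lam.rowLen (nth (RowLongerThan lam mu c) w) - mu.rowLen (nth _ w) :=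
    nth_mem_of_lt_count h
  have hmem : canonicalCell lam mu c w ∈ skewCells lam mu := by
    rw [mem_skewCells_iff]
    dsimp only [canonicalCell]
    omega
  have hdist : distToRowEnd lam (canonicalCell lam mu c w) = c := by
    dsimp only [distToRowEnd, canonicalCell]
    omega
  refine ⟨hmem, hdist, ?_, nth_lt_of_lt_count h⟩
  rw [canonicalFilling_of_mem hmem, hdist]
  exact congrArg (· + 1) (count_nth_of_lt_count h)

theorem canonicalFilling_eq_succ {p : ℕ × ℕ} {w : ℕ} (hp : p ∈ skewCells lam mu)
    (h : canonicalFilling lam mu p = w + 1) :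
    count (RowLongerThan lam mu (distToRowEnd lam p)) p.1 = w ∧
      p = canonicalCell lam mu (distToRowEnd lam p) w := by
  rw [canonicalFilling_of_mem hp, add_left_inj] at h
  refine ⟨h, ?_⟩
  have hlong := rowLongerThan_distToRowEnd hp
  have := mem_skewCells_iff.mp hp
  dsimp only [canonicalCell]
  rw [← h, nth_count hlong]
  ext
  · rfl
  · dsimp only [distToRowEnd]
    omega

theorem isSSYT_canonicalFilling : IsSSYT lam mu (canonicalFilling lam mu) := by
  refine ⟨fun p => ?_, fun i j₁ j₂ h₁ h₂ hj => ?_, fun i₁ i₂ j h₁ h₂ hi => ?_⟩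
  · by_cases hp : p ∈ skewCells lam mu <;> simp [canonicalFilling, hp]
  · rw [canonicalFilling_of_mem h₁, canonicalFilling_of_mem h₂, add_le_add_iff_right]
    exact count_mono_left fun _ _ => RowLongerThan.anti (by dsimp only [distToRowEnd]; omega)
  · rw [canonicalFilling_of_mem h₁, canonicalFilling_of_mem h₂, add_lt_add_iff_right]
    have hm₁ := mem_skewCells_iff.mp h₁
    have hm₂ := mem_skewCells_iff.mp h₂
    have hlam := lam.rowLen_anti i₁ i₂ hi.le
    simp only at hm₁ hm₂
    calc count (RowLongerThan lam mu (distToRowEnd lam (i₁, j))) i₁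
        ≤ count (RowLongerThan lam mu (distToRowEnd lam (i₂, j))) i₁ :=
          count_mono_left fun _ _ => RowLongerThan.anti (by dsimp only [distToRowEnd]; omega)
      _ < count (RowLongerThan lam mu (distToRowEnd lam (i₂, j))) i₂ :=
          count_strict_mono (by dsimp only [RowLongerThan, distToRowEnd]; omega) hi

/-- Each entry `w + 2` is matched with the entry `w + 1` at the same distance from the row end,
which lies in an earlier row. -/
theorem isLattice_canonicalFilling : IsLattice lam mu (canonicalFilling lam mu) := by
  intro i j w
  refine card_le_card_of_injOn (fun p => canonicalCell lam mu (distToRowEnd lam p) w)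
    (fun p hp => ?_) (fun p hp q hq hpq => ?_)
  · simp only [mem_coe, mem_filter] at hp ⊢
    obtain ⟨hpS, hpos, hpT⟩ := hp
    have hcount := (canonicalFilling_eq_succ hpS hpT).1
    obtain ⟨hmem, -, hval, hrow⟩ := canonicalCell_spec (hcount ▸ lt_add_one w)
    exact ⟨hmem, by omega, hval⟩
  · simp only [mem_coe, mem_filter] at hp hq
    obtain ⟨hpc, hpeq⟩ := canonicalFilling_eq_succ hp.1 hp.2.2
    obtain ⟨hqc, hqeq⟩ := canonicalFilling_eq_succ hq.1 hq.2.2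
    have hdist : distToRowEnd lam p = distToRowEnd lam q := by
      have := congrArg (distToRowEnd lam) hpq
      rwa [(canonicalCell_spec (hpc ▸ lt_add_one w)).2.1,
        (canonicalCell_spec (hqc ▸ lt_add_one w)).2.1] at this
    calc p = canonicalCell lam mu (distToRowEnd lam p) (w + 1) := hpeq
      _ = canonicalCell lam mu (distToRowEnd lam q) (w + 1) := by rw [hdist]
      _ = q := hqeq.symm

theorem content_canonicalFilling (w : ℕ) :
    content lam mu (canonicalFilling lam mu) (w + 1) =
      #{c ∈ range (lam.rowLen 0) | w < count (RowLongerThan lam mu c) (lam.colLen 0)} := by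
  have himage : (skewCells lam mu).filter (canonicalFilling lam mu · = w + 1) =
      {c ∈ range (lam.rowLen 0) | w < count (RowLongerThan lam mu c) (lam.colLen 0)}.image
        (canonicalCell lam mu · w) := by
    ext p
    simp only [mem_filter, mem_image, mem_range]
    constructor
    · rintro ⟨hp, hval⟩
      obtain ⟨hcount, hpeq⟩ := canonicalFilling_eq_succ hp hval
      have hlong := rowLongerThan_distToRowEnd hp
      refine ⟨distToRowEnd lam p, ⟨hlong.lt_rowLen_zero, ?_⟩, hpeq.symm⟩
      calc w < count (RowLongerThan lam mu (distToRowEnd lam p)) (p.1 + 1) := by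
            rw [count_succ, if_pos hlong]
            omega
        _ ≤ _ := count_monotone _ hlong.lt_colLen
    · rintro ⟨c, ⟨-, hc⟩, rfl⟩
      exact ⟨(canonicalCell_spec hc).1, (canonicalCell_spec hc).2.2.1⟩
  rw [content, himage, Finset.card_image_of_injOn]
  intro c hc c' hc' h
  simp only [coe_filter, mem_range, Set.mem_ofPred_eq] at hc hc' h
  rw [← (canonicalCell_spec hc.2).2.1, ← (canonicalCell_spec hc'.2).2.1, h]

/-- The partition whose `(w+1)`-st part is the `(w+1)`-st largest row length of `λ/μ`. -/
def sortedRows (lam mu : YoungDiagram) : YoungDiagram where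
  cells := (range (lam.colLen 0) ×ˢ range (lam.rowLen 0)).filter
    fun p => p.1 < count (RowLongerThan lam mu p.2) (lam.colLen 0)
  isLowerSet := by
    intro a b hba ha
    simp only [coe_filter, mem_product, mem_range, Set.mem_ofPred_eq] at ha ⊢
    have h₁ : b.1 ≤ a.1 := hba.1
    have h₂ : b.2 ≤ a.2 := hba.2
    have hcount := count_mono_left (n := lam.colLen 0) (p := RowLongerThan lam mu a.2)
      (q := RowLongerThan lam mu b.2) fun _ _ => RowLongerThan.anti h₂
    exact ⟨⟨by omega, by omega⟩, by omega⟩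

theorem mem_sortedRows {p : ℕ × ℕ} :
    p ∈ sortedRows lam mu ↔ p.1 < count (RowLongerThan lam mu p.2) (lam.colLen 0) := by
  rw [← mem_cells]
  simp only [sortedRows, mem_filter, mem_product, mem_range, and_iff_right_iff_imp]
  intro h
  exact ⟨h.trans_le (count_le _), (nth_mem_of_lt_count h).lt_rowLen_zero⟩

theorem colLen_sortedRows (c : ℕ) :
    (sortedRows lam mu).colLen c = count (RowLongerThan lam mu c) (lam.colLen 0) :=
  eq_of_forall_lt_iff fun w => by rw [← mem_iff_lt_colLen, mem_sortedRows]

theorem rowLen_sortedRows (w : ℕ) :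
    (sortedRows lam mu).rowLen w =
      #{c ∈ range (lam.rowLen 0) | w < count (RowLongerThan lam mu c) (lam.colLen 0)} := by
  have hfilter : {c ∈ range (lam.rowLen 0) | w < count (RowLongerThan lam mu c) (lam.colLen 0)} =
      range ((sortedRows lam mu).rowLen w) := by
    ext c
    rw [mem_filter, mem_range, mem_range, ← mem_iff_lt_rowLen (μ := sortedRows lam mu),
      mem_sortedRows]
    exact ⟨And.right, fun h => ⟨(nth_mem_of_lt_count h).lt_rowLen_zero, h⟩⟩
  rw [hfilter, card_range]

theorem isLR_canonicalFilling :
    IsLR lam mu (sortedRows lam mu) (canonicalFilling lam mu) :=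
  ⟨isSSYT_canonicalFilling, isLattice_canonicalFilling, fun w => by
    rw [content_canonicalFilling, rowLen_sortedRows]⟩

theorem truncRowSum_succ (lam mu : YoungDiagram) (k : ℕ) :
    truncRowSum lam mu (k + 1) =
      truncRowSum lam mu k + count (RowLongerThan lam mu k) (lam.colLen 0) := by
  rw [truncRowSum, truncRowSum, count_eq_card_filter_range, card_filter, ← sum_add_distrib]
  refine sum_congr rfl fun i _ => ?_
  by_cases h : RowLongerThan lam mu k i
  · rw [if_pos h]
    unfold RowLongerThan at h
    omega
  · rw [if_neg h]
    unfold RowLongerThan at h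
    omega

theorem count_rowLongerThan_bot (nu : YoungDiagram) (c : ℕ) :
    count (RowLongerThan nu ⊥ c) (nu.colLen 0) = nu.colLen c := by
  rw [count_eq_card_filter_range]
  convert card_range (nu.colLen c)
  ext i
  have := nu.colLen_anti 0 c (Nat.zero_le c)
  rw [mem_filter, mem_range, mem_range, RowLongerThan, rowLen_bot, Nat.sub_zero,
    ← mem_iff_lt_rowLen, mem_iff_lt_colLen]
  omega

theorem truncRowSum_sortedRows : truncRowSum (sortedRows lam mu) ⊥ = truncRowSum lam mu := by
  funext k
  induction k with
  | zero => simp [truncRowSum]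
  | succ k ih =>
    rw [truncRowSum_succ, truncRowSum_succ, ih, count_rowLongerThan_bot, colLen_sortedRows]

theorem finite_setOf_isLR (lam mu nu : YoungDiagram) : {T | IsLR lam mu nu T}.Finite := by
  let extend : (skewCells lam mu → Fin (nu.colLen 0 + 1)) → ℕ × ℕ → ℕ :=
    fun f p => if hp : p ∈ skewCells lam mu then f ⟨p, hp⟩ else 0
  refine (Set.finite_range extend).subset fun T hT => ?_
  obtain ⟨⟨hsupp, -, -⟩, -, hcont⟩ := hT
  have hbound (p : ℕ × ℕ) : T p < nu.colLen 0 + 1 := by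
    by_cases hzero : T p = 0
    · omega
    obtain ⟨w, hw⟩ := exists_eq_add_one_of_ne_zero hzero
    have hpos : 0 < nu.rowLen w :=
      hcont w ▸ card_pos.mpr ⟨p, mem_filter.mpr ⟨(hsupp p).mpr hzero, hw⟩⟩
    have := lt_colLen_of_pos_rowLen hpos
    omega
  refine ⟨fun p => ⟨T p, hbound p⟩, funext fun p => ?_⟩
  by_cases hp : p ∈ skewCells lam mu
  · simp [extend, hp]
  · simpa [extend, hp] using (not_not.mp ((hsupp p).not.mp hp)).symm

theorem lrCoeff_ne_zero_iff (hmu : mu ≤ lam) (nu : YoungDiagram) :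
    lrCoeff lam mu nu ≠ 0 ↔ ∃ T, IsLR lam mu nu T := by
  rw [lrCoeff, if_pos hmu, ← Nat.pos_iff_ne_zero, Set.ncard_pos (finite_setOf_isLR lam mu nu)]
  rfl

theorem truncRowSum_le_of_schurEq {alp bet : YoungDiagram} (hmu : mu ≤ lam) (hbet : bet ≤ alp)
    (h : SchurEq lam mu alp bet) (k : ℕ) : truncRowSum lam mu k ≤ truncRowSum alp bet k := by
  have hne : lrCoeff alp bet (sortedRows lam mu) ≠ 0 :=
    h _ ▸ (lrCoeff_ne_zero_iff hmu _).mpr ⟨_, isLR_canonicalFilling⟩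
  obtain ⟨T, hT⟩ := (lrCoeff_ne_zero_iff hbet _).mp hne
  calc truncRowSum lam mu k = truncRowSum (sortedRows lam mu) ⊥ k := by
        rw [truncRowSum_sortedRows]
    _ ≤ truncRowSum alp bet k := truncRowSum_le_of_isLR hT k

theorem ncard_rowLen_sub_eq_succ (c : ℕ) :
    {i | lam.rowLen i - mu.rowLen i = c + 1}.ncard =
      count (RowLongerThan lam mu c) (lam.colLen 0) -
        count (RowLongerThan lam mu (c + 1)) (lam.colLen 0) := by
  have hset : {i | lam.rowLen i - mu.rowLen i = c + 1} =
      ↑({i ∈ range (lam.colLen 0) | RowLongerThan lam mu c i} \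
        {i ∈ range (lam.colLen 0) | RowLongerThan lam mu (c + 1) i}) := by
    ext i
    simp only [Set.mem_ofPred_eq, mem_coe, mem_sdiff, mem_filter, mem_range]
    unfold RowLongerThan
    have : 0 < lam.rowLen i → i < lam.colLen 0 := lt_colLen_of_pos_rowLen
    omega
  rw [hset, Set.ncard_coe_finset, card_sdiff_of_subset
    (monotone_filter_right _ fun _ _ => RowLongerThan.anti c.le_succ),
    count_eq_card_filter_range, count_eq_card_filter_range]

end

/-- skew diagrams with equal skew Schur functions have the same multiset of
row lengths (parts). -/
theorem rowLengths_eq_of_schurEq (lam mu alp bet : YoungDiagram)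
    (hmu : mu ≤ lam) (hbet : bet ≤ alp) (h : SchurEq lam mu alp bet) :
    ∀ r : ℕ, 0 < r →
      {i : ℕ | lam.rowLen i - mu.rowLen i = r}.ncard =
        {i : ℕ | alp.rowLen i - bet.rowLen i = r}.ncard := by
  have htrunc : truncRowSum lam mu = truncRowSum alp bet := funext fun k =>
    (truncRowSum_le_of_schurEq hmu hbet h k).antisymm
      (truncRowSum_le_of_schurEq hbet hmu (fun nu => (h nu).symm) k)
  have hcount (c : ℕ) : count (RowLongerThan lam mu c) (lam.colLen 0) =
      count (RowLongerThan alp bet c) (alp.colLen 0) := by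
    have := congrFun htrunc (c + 1)
    rw [truncRowSum_succ, truncRowSum_succ, congrFun htrunc c] at this
    omega
  intro r hr
  obtain ⟨c, rfl⟩ := exists_eq_add_one_of_ne_zero hr.ne'
  rw [ncard_rowLen_sub_eq_succ, ncard_rowLen_sub_eq_succ, hcount, hcount]

end LRSkew
end

section
/- Removing the top box of every column of a skew diagram λ/μ gives a skew diagram λ̂/μ with λ̂ obtained from λ by decreasing each of the columns' top rows, and there is a bijection between LR tableaux of shape λ/μ with content ν satisfying ν_1 = λ_1 (maximal first part) and LR tableaux of shape λ̂/μ with content (ν_2, ν_3, …). Consequently c(λ; μ, ν) with ν_1 = λ_1 equals c(λ̂; μ, (ν_2, ν_3, …)). -/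
/-!
The `nu_1 = lam_1` ones of an LR tableau of shape `lam/mu` lie in distinct columns (columns are
strict) and there are exactly `lam_1` columns, so every column carries a `1`, necessarily at its
top, and every other entry is at least `2`. Deleting the tops and decreasing the other entries by
`1` shifts every entry value `k + 1 ≥ 2` one row up without changing the relative reading order,
so semistandardness, the lattice property for the values `≥ 2` and the content are transported;
conversely the lattice inequality between `1`s and `2`s is automatic once each column starts with
a `1`.
-/

open YoungDiagram
open scoped Classical

namespace LRSkew

section

variable {lam lamHat mu nu nuHat : YoungDiagram} {T S : ℕ × ℕ → ℕ}

theorem mem_skewCells_iff_s6 {i j : ℕ} :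
    (i, j) ∈ skewCells lam mu ↔ mu.colLen j ≤ i ∧ i < lam.colLen j := by
  simp only [skewCells, Finset.mem_sdiff, mem_cells, mem_iff_lt_colLen, not_lt]
  exact and_comm

theorem mem_skewCells_of_colLen_eq_sub_one (hhat : ∀ j, lamHat.colLen j = lam.colLen j - 1)
    {i j : ℕ} : (i, j) ∈ skewCells lamHat mu ↔ mu.colLen j ≤ i ∧ i + 1 < lam.colLen j := by
  rw [mem_skewCells_iff_s6, hhat]
  omega

theorem snd_lt_rowLen_zero {p : ℕ × ℕ} (hp : p ∈ skewCells lam mu) : p.2 < lam.rowLen 0 :=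
  mem_iff_lt_rowLen.mp <| mem_iff_lt_colLen.mpr <| by
    have := (mem_skewCells_iff_s6.mp hp).2
    omega

theorem image_snd_filter_subset_range (P : ℕ × ℕ → Prop) [DecidablePred P] :
    ((skewCells lam mu).filter P).image Prod.snd ⊆ Finset.range (lam.rowLen 0) := by
  intro j hj
  obtain ⟨p, hp, rfl⟩ := Finset.mem_image.mp hj
  exact Finset.mem_range.mpr (snd_lt_rowLen_zero (Finset.mem_filter.mp hp).1)

theorem IsBasic.le_of_colLen_eq_sub_one (hbasic : IsBasic lam mu) (hmu : mu ≤ lam)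
    (hhat : ∀ j, lamHat.colLen j = lam.colLen j - 1) : mu ≤ lamHat := by
  intro ⟨i, j⟩ hp
  have hj : j < lam.rowLen 0 :=
    mem_iff_lt_rowLen.mp (hmu (mu.up_left_mem (Nat.zero_le i) le_rfl hp))
  have := hbasic.2 j hj
  rw [mem_iff_lt_colLen] at hp ⊢
  rw [hhat]
  omega

/-- The cells of `lam/mu` below the top of their column are the cells of `lamHat/mu` moved one
row down. -/
theorem card_filter_skewCells_succ (hhat : ∀ j, lamHat.colLen j = lam.colLen j - 1)
    (P : ℕ × ℕ → Prop) [DecidablePred P]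
    (hP : ∀ q ∈ skewCells lam mu, P q → mu.colLen q.2 < q.1) :
    ((skewCells lamHat mu).filter fun p => P (p.1 + 1, p.2)).card =
      ((skewCells lam mu).filter P).card := by
  apply Finset.card_nbij' (fun p => (p.1 + 1, p.2)) (fun q => (q.1 - 1, q.2))
  · rintro ⟨i, j⟩ hp
    simp only [Finset.mem_coe, Finset.mem_filter, mem_skewCells_of_colLen_eq_sub_one hhat] at hp
    simp only [Finset.mem_coe, Finset.mem_filter, mem_skewCells_iff_s6]
    exact ⟨by omega, hp.2⟩
  · rintro ⟨i, j⟩ hq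
    simp only [Finset.mem_coe, Finset.mem_filter] at hq
    have hi := hP _ hq.1 hq.2
    have := mem_skewCells_iff_s6.mp hq.1
    simp only at hi
    simp only [Finset.mem_coe, Finset.mem_filter, mem_skewCells_of_colLen_eq_sub_one hhat]
    rw [Nat.sub_add_cancel (by omega : 1 ≤ i)]
    exact ⟨⟨by omega, by omega⟩, hq.2⟩
  · intro p _
    simp
  · rintro ⟨i, j⟩ hq
    have := hP _ (Finset.mem_filter.mp hq).1 (Finset.mem_filter.mp hq).2
    simp only at this ⊢
    rw [Nat.sub_add_cancel (by omega : 1 ≤ i)]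

def OnesOnTop (lam mu : YoungDiagram) (T : ℕ × ℕ → ℕ) : Prop :=
  ∀ j, mu.colLen j < lam.colLen j → T (mu.colLen j, j) = 1

theorem OnesOnTop.colLen_lt (htop : OnesOnTop lam mu T) {i j : ℕ}
    (hp : (i, j) ∈ skewCells lam mu) (h : T (i, j) ≠ 1) : mu.colLen j < i := by
  obtain ⟨hle, hlt⟩ := mem_skewCells_iff_s6.mp hp
  refine lt_of_le_of_ne hle fun hi => h ?_
  subst hi
  exact htop j hlt

theorem OnesOnTop.prefixCount_zero_eq_zero (htop : OnesOnTop lam mu T) (j : ℕ) {k : ℕ}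
    (hk : k ≠ 1) : prefixCount lam mu T 0 j k = 0 := by
  rw [prefixCount, Finset.card_eq_zero, Finset.filter_eq_empty_iff]
  rintro ⟨i, j'⟩ hp ⟨hrow, rfl⟩
  have := htop.colLen_lt hp hk
  simp only at hrow
  omega

theorem IsSSYT.lt_of_fst_lt (hT : IsSSYT lam mu T) {i₁ i₂ j : ℕ}
    (h₁ : (i₁, j) ∈ skewCells lam mu) (h₂ : (i₂, j) ∈ skewCells lam mu) (hi : i₁ < i₂) :
    T (i₁, j) < T (i₂, j) :=
  hT.2.2 i₁ i₂ j h₁ h₂ hi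

theorem IsSSYT.injOn_snd (hT : IsSSYT lam mu T) (k : ℕ) :
    Set.InjOn Prod.snd (↑((skewCells lam mu).filter fun p => T p = k) : Set (ℕ × ℕ)) := by
  rintro ⟨a, j⟩ hp ⟨b, j'⟩ hq (rfl : j = j')
  simp only [Finset.mem_coe, Finset.mem_filter] at hp hq
  rcases lt_trichotomy a b with h | rfl | h
  · exact absurd (hT.lt_of_fst_lt hp.1 hq.1 h) (by omega)
  · rfl
  · exact absurd (hT.lt_of_fst_lt hq.1 hp.1 h) (by omega)

theorem IsSSYT.content_eq_card_image_snd (hT : IsSSYT lam mu T) (k : ℕ) :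
    content lam mu T k = (((skewCells lam mu).filter fun p => T p = k).image Prod.snd).card :=
  (Finset.card_image_of_injOn (hT.injOn_snd k)).symm

theorem IsLR.onesOnTop (hT : IsLR lam mu nu T) (hnu1 : nu.rowLen 0 = lam.rowLen 0) :
    OnesOnTop lam mu T := by
  intro j hj
  have hcols : ((skewCells lam mu).filter fun p => T p = 1).image Prod.snd =
      Finset.range (lam.rowLen 0) := by
    refine Finset.eq_of_subset_of_card_le (image_snd_filter_subset_range _) ?_
    rw [Finset.card_range, ← hT.1.content_eq_card_image_snd, ← hnu1]
    exact (hT.2.2 0).ge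
  have htop : (mu.colLen j, j) ∈ skewCells lam mu := mem_skewCells_iff_s6.mpr ⟨le_rfl, hj⟩
  obtain ⟨⟨i, j'⟩, hp, hj'⟩ :=
    Finset.mem_image.mp (hcols ▸ Finset.mem_range.mpr (snd_lt_rowLen_zero htop))
  obtain rfl : j' = j := hj'
  rw [Finset.mem_filter] at hp
  rcases (mem_skewCells_iff_s6.mp hp.1).1.eq_or_lt with h | h
  · rw [h]
    exact hp.2
  · have := hT.1.lt_of_fst_lt htop hp.1 h
    have := (hT.1.1 _).mp htop
    omega

theorem IsSSYT.content_one_of_onesOnTop (hbasic : IsBasic lam mu) (hT : IsSSYT lam mu T)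
    (htop : OnesOnTop lam mu T) : content lam mu T 1 = lam.rowLen 0 := by
  rw [hT.content_eq_card_image_snd, ← Finset.card_range (lam.rowLen 0)]
  refine congrArg Finset.card ((image_snd_filter_subset_range _).antisymm fun j hj => ?_)
  have hcol := hbasic.2 j (Finset.mem_range.mp hj)
  exact Finset.mem_image.mpr
    ⟨_, Finset.mem_filter.mpr ⟨mem_skewCells_iff_s6.mpr ⟨le_rfl, hcol⟩, htop j hcol⟩, rfl⟩

/-- Each `2` sits strictly below the `1` on top of its column, and there is at most one `2` per
column. -/
theorem IsSSYT.prefixCount_two_le_one (hT : IsSSYT lam mu T) (htop : OnesOnTop lam mu T)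
    (i j : ℕ) : prefixCount lam mu T i j 2 ≤ prefixCount lam mu T i j 1 := by
  refine Finset.card_le_card_of_injOn (fun q => (mu.colLen q.2, q.2)) ?_ ?_
  · rintro ⟨a, b⟩ hq
    simp only [Finset.mem_coe, Finset.mem_filter] at hq ⊢
    obtain ⟨hq, hrow, h2⟩ := hq
    have hlt := htop.colLen_lt hq (by omega)
    have hcol := (mem_skewCells_iff_s6.mp hq).2
    exact ⟨mem_skewCells_iff_s6.mpr ⟨le_rfl, by omega⟩, by omega, htop b (by omega)⟩
  · intro q hq q' hq' h
    simp only [Finset.mem_coe, Finset.mem_filter] at hq hq'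
    exact hT.injOn_snd 2 (by simp [hq.1, hq.2.2]) (by simp [hq'.1, hq'.2.2])
      (Prod.ext_iff.mp h).2

/-- On a filling with ones on top this deletes the top boxes, whose entries become `0`: cell
`(i + 1, j)` of `lam/mu` becomes cell `(i, j)` of `lamHat/mu`. -/
def removeTops (T : ℕ × ℕ → ℕ) (p : ℕ × ℕ) : ℕ := T (p.1 + 1, p.2) - 1

theorem IsSSYT.removeTops (hhat : ∀ j, lamHat.colLen j = lam.colLen j - 1)
    (hT : IsSSYT lam mu T) (htop : OnesOnTop lam mu T) :
    IsSSYT lamHat mu (removeTops T) := by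
  have below_top {i j : ℕ} (hp : (i, j) ∈ skewCells lamHat mu) :
      (i + 1, j) ∈ skewCells lam mu ∧ 2 ≤ T (i + 1, j) := by
    obtain ⟨hle, hlt⟩ := (mem_skewCells_of_colLen_eq_sub_one hhat).mp hp
    have hmem : (i + 1, j) ∈ skewCells lam mu := mem_skewCells_iff_s6.mpr ⟨by omega, hlt⟩
    have := hT.lt_of_fst_lt (mem_skewCells_iff_s6.mpr ⟨le_rfl, by omega⟩) hmem (by omega)
    rw [htop j (by omega)] at this
    exact ⟨hmem, this⟩
  refine ⟨fun ⟨i, j⟩ => ⟨fun hp => ?_, fun hne => ?_⟩, fun i j₁ j₂ h₁ h₂ hj => ?_,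
    fun i₁ i₂ j h₁ h₂ hi => ?_⟩
  · have := (below_top hp).2
    simp only [LRSkew.removeTops]
    omega
  · have h2 : 2 ≤ T (i + 1, j) := by
      simp only [LRSkew.removeTops] at hne
      omega
    have hmem : (i + 1, j) ∈ skewCells lam mu := (hT.1 _).mpr (by omega)
    have hlt := htop.colLen_lt hmem (by omega)
    have := mem_skewCells_iff_s6.mp hmem
    rw [mem_skewCells_of_colLen_eq_sub_one hhat]
    omega
  · have := hT.2.1 (i + 1) j₁ j₂ (below_top h₁).1 (below_top h₂).1 hj
    simp only [LRSkew.removeTops]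
    omega
  · have := hT.lt_of_fst_lt (below_top h₁).1 (below_top h₂).1 (by omega)
    have := (below_top h₁).2
    simp only [LRSkew.removeTops]
    omega

theorem prefixCount_removeTops (hhat : ∀ j, lamHat.colLen j = lam.colLen j - 1)
    (htop : OnesOnTop lam mu T) (i j m : ℕ) :
    prefixCount lamHat mu (removeTops T) i j (m + 1) = prefixCount lam mu T (i + 1) j (m + 2) := by
  rw [prefixCount, prefixCount, ← card_filter_skewCells_succ hhat _
    fun _ hq h => htop.colLen_lt hq (h.2.trans_ne (by omega))]
  refine congrArg Finset.card (Finset.filter_congr fun p _ => ?_)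
  simp only [removeTops]
  omega

theorem content_removeTops (hhat : ∀ j, lamHat.colLen j = lam.colLen j - 1)
    (htop : OnesOnTop lam mu T) (m : ℕ) :
    content lamHat mu (removeTops T) (m + 1) = content lam mu T (m + 2) := by
  rw [content, content, ← card_filter_skewCells_succ hhat _
    fun _ hq h => htop.colLen_lt hq (h.trans_ne (by omega))]
  refine congrArg Finset.card (Finset.filter_congr fun p _ => ?_)
  simp only [removeTops]
  omega

theorem IsLR.removeTops (hhat : ∀ j, lamHat.colLen j = lam.colLen j - 1)
    (hnu1 : nu.rowLen 0 = lam.rowLen 0) (hnuHat : ∀ i, nuHat.rowLen i = nu.rowLen (i + 1))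
    (hT : IsLR lam mu nu T) : IsLR lamHat mu nuHat (removeTops T) := by
  have htop := hT.onesOnTop hnu1
  refine ⟨hT.1.removeTops hhat htop, fun i j k => ?_, fun i => ?_⟩
  · rw [prefixCount_removeTops hhat htop, prefixCount_removeTops hhat htop]
    exact hT.2.1 (i + 1) j (k + 1)
  · rw [content_removeTops hhat htop, hnuHat]
    exact hT.2.2 (i + 1)

def addTops (lam mu : YoungDiagram) (S : ℕ × ℕ → ℕ) (p : ℕ × ℕ) : ℕ :=
  if p ∈ skewCells lam mu then if p.1 = mu.colLen p.2 then 1 else S (p.1 - 1, p.2) + 1 else 0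

theorem addTops_of_not_mem {p : ℕ × ℕ} (hp : p ∉ skewCells lam mu) : addTops lam mu S p = 0 :=
  if_neg hp

theorem addTops_ne_zero {p : ℕ × ℕ} (hp : p ∈ skewCells lam mu) : addTops lam mu S p ≠ 0 := by
  rw [addTops, if_pos hp]
  split_ifs <;> omega

theorem onesOnTop_addTops : OnesOnTop lam mu (addTops lam mu S) := fun j hj => by
  rw [addTops, if_pos (mem_skewCells_iff_s6.mpr ⟨le_rfl, hj⟩), if_pos rfl]

theorem addTops_of_colLen_lt {i j : ℕ} (hp : (i, j) ∈ skewCells lam mu) (hi : mu.colLen j < i) :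
    addTops lam mu S (i, j) = S (i - 1, j) + 1 := by
  rw [addTops, if_pos hp, if_neg hi.ne']

theorem pred_mem_skewCells (hhat : ∀ j, lamHat.colLen j = lam.colLen j - 1) {i j : ℕ}
    (hp : (i, j) ∈ skewCells lam mu) (hi : mu.colLen j < i) : (i - 1, j) ∈ skewCells lamHat mu := by
  have := mem_skewCells_iff_s6.mp hp
  rw [mem_skewCells_of_colLen_eq_sub_one hhat]
  omega

theorem addTops_succ (hhat : ∀ j, lamHat.colLen j = lam.colLen j - 1) {i j : ℕ}
    (hp : (i, j) ∈ skewCells lamHat mu) : addTops lam mu S (i + 1, j) = S (i, j) + 1 := by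
  obtain ⟨hle, hlt⟩ := (mem_skewCells_of_colLen_eq_sub_one hhat).mp hp
  rw [addTops_of_colLen_lt (mem_skewCells_iff_s6.mpr ⟨by omega, hlt⟩) (by omega), Nat.add_sub_cancel]

theorem IsSSYT.addTops (hhat : ∀ j, lamHat.colLen j = lam.colLen j - 1)
    (hS : IsSSYT lamHat mu S) : IsSSYT lam mu (addTops lam mu S) := by
  refine ⟨fun p => ⟨addTops_ne_zero, fun hne => ?_⟩, fun i j₁ j₂ h₁ h₂ hj => ?_,
    fun i₁ i₂ j h₁ h₂ hi => ?_⟩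
  · by_contra hp
    exact hne (addTops_of_not_mem hp)
  · have hpos := addTops_ne_zero (S := S) h₂
    rcases (mem_skewCells_iff_s6.mp h₁).1.eq_or_lt with rfl | hlt
    · rw [onesOnTop_addTops j₁ (mem_skewCells_iff_s6.mp h₁).2]
      omega
    · have hlt₂ : mu.colLen j₂ < i := (mu.colLen_anti j₁ j₂ hj).trans_lt hlt
      rw [addTops_of_colLen_lt h₁ hlt, addTops_of_colLen_lt h₂ hlt₂]
      have := hS.2.1 (i - 1) j₁ j₂ (pred_mem_skewCells hhat h₁ hlt)
        (pred_mem_skewCells hhat h₂ hlt₂) hj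
      omega
  · have hlt₂ : mu.colLen j < i₂ := (mem_skewCells_iff_s6.mp h₁).1.trans_lt hi
    have hmem₂ := pred_mem_skewCells hhat h₂ hlt₂
    rw [addTops_of_colLen_lt h₂ hlt₂]
    rcases (mem_skewCells_iff_s6.mp h₁).1.eq_or_lt with rfl | hlt₁
    · rw [onesOnTop_addTops j (mem_skewCells_iff_s6.mp h₁).2]
      have := (hS.1 _).mp hmem₂
      omega
    · rw [addTops_of_colLen_lt h₁ hlt₁]
      have := hS.lt_of_fst_lt (pred_mem_skewCells hhat h₁ hlt₁) hmem₂ (by omega)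
      omega

theorem prefixCount_addTops (hhat : ∀ j, lamHat.colLen j = lam.colLen j - 1) (i j m : ℕ) :
    prefixCount lam mu (addTops lam mu S) (i + 1) j (m + 2) =
      prefixCount lamHat mu S i j (m + 1) := by
  rw [prefixCount, prefixCount, ← card_filter_skewCells_succ hhat _
    fun _ hq h => onesOnTop_addTops.colLen_lt hq (h.2.trans_ne (by omega))]
  refine congrArg Finset.card (Finset.filter_congr fun p hp => ?_)
  obtain ⟨a, b⟩ := p
  simp only [addTops_succ hhat hp]
  omega

theorem content_addTops (hhat : ∀ j, lamHat.colLen j = lam.colLen j - 1) (m : ℕ) :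
    content lam mu (addTops lam mu S) (m + 2) = content lamHat mu S (m + 1) := by
  rw [content, content, ← card_filter_skewCells_succ hhat _
    fun _ hq h => onesOnTop_addTops.colLen_lt hq (h.trans_ne (by omega))]
  refine congrArg Finset.card (Finset.filter_congr fun p hp => ?_)
  obtain ⟨a, b⟩ := p
  simp only [addTops_succ hhat hp]
  omega

theorem IsLR.addTops (hhat : ∀ j, lamHat.colLen j = lam.colLen j - 1) (hbasic : IsBasic lam mu)
    (hnu1 : nu.rowLen 0 = lam.rowLen 0) (hnuHat : ∀ i, nuHat.rowLen i = nu.rowLen (i + 1))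
    (hS : IsLR lamHat mu nuHat S) : IsLR lam mu nu (addTops lam mu S) := by
  have hT := hS.1.addTops hhat
  refine ⟨hT, fun i j k => ?_, fun k => ?_⟩
  · rcases k with _ | k
    · exact hT.prefixCount_two_le_one onesOnTop_addTops i j
    rcases i with _ | i
    · rw [onesOnTop_addTops.prefixCount_zero_eq_zero j (by omega)]
      exact Nat.zero_le _
    · rw [prefixCount_addTops hhat, prefixCount_addTops hhat]
      exact hS.2.1 i j k
  · rcases k with _ | k
    · rw [hT.content_one_of_onesOnTop hbasic onesOnTop_addTops, hnu1]
    · rw [content_addTops hhat, hS.2.2, hnuHat]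

theorem addTops_removeTops (hT : IsSSYT lam mu T) (htop : OnesOnTop lam mu T) :
    addTops lam mu (removeTops T) = T := by
  funext ⟨i, j⟩
  by_cases hp : (i, j) ∈ skewCells lam mu
  · have hpos := (hT.1 _).mp hp
    rcases (mem_skewCells_iff_s6.mp hp).1.eq_or_lt with rfl | hlt
    · have hcol := (mem_skewCells_iff_s6.mp hp).2
      rw [onesOnTop_addTops j hcol, htop j hcol]
    · rw [addTops_of_colLen_lt hp hlt]
      simp only [removeTops]
      rw [Nat.sub_add_cancel (by omega : 1 ≤ i)]
      omega
  · rw [addTops_of_not_mem hp]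
    by_contra h
    exact hp ((hT.1 _).mpr (Ne.symm h))

theorem removeTops_addTops (hhat : ∀ j, lamHat.colLen j = lam.colLen j - 1)
    (hS : IsSSYT lamHat mu S) : removeTops (addTops lam mu S) = S := by
  funext ⟨i, j⟩
  simp only [removeTops]
  by_cases hp : (i, j) ∈ skewCells lamHat mu
  · rw [addTops_succ hhat hp, Nat.add_sub_cancel]
  · have hS0 : S (i, j) = 0 := by
      by_contra h
      exact hp ((hS.1 _).mpr h)
    have : addTops lam mu S (i + 1, j) ≤ 1 := by
      rw [addTops]
      split_ifs with hmem htop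
      · exact le_rfl
      · exact absurd (pred_mem_skewCells hhat hmem
          ((mem_skewCells_iff_s6.mp hmem).1.lt_of_ne (Ne.symm htop))) hp
      · exact Nat.zero_le _
    omega

end

/-- removing the top box of every column gives a skew diagram `lamHat/mu`, and
LR tableaux of `lam/mu` with maximal first part of the content `nu_1 = lam_1` correspond to
LR tableaux of `lamHat/mu` with content `(nu_2, nu_3, …)`. -/
theorem lrCoeff_remove_top_boxes (lam mu : YoungDiagram) (hmu : mu ≤ lam)
    (hbasic : IsBasic lam mu)
    (lamHat : YoungDiagram) (hhat : ∀ j, lamHat.colLen j = lam.colLen j - 1)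
    (nu nuHat : YoungDiagram) (hnu1 : nu.rowLen 0 = lam.rowLen 0)
    (hnuHat : ∀ i, nuHat.rowLen i = nu.rowLen (i + 1)) :
    mu ≤ lamHat ∧ lrCoeff lam mu nu = lrCoeff lamHat mu nuHat := by
  have hmuHat : mu ≤ lamHat := hbasic.le_of_colLen_eq_sub_one hmu hhat
  have hbij : Set.BijOn removeTops {T | IsLR lam mu nu T} {S | IsLR lamHat mu nuHat S} :=
    Set.InvOn.bijOn
      ⟨fun T hT => addTops_removeTops hT.1 (hT.onesOnTop hnu1),
        fun S hS => removeTops_addTops hhat hS.1⟩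
      (fun T hT => hT.removeTops hhat hnu1 hnuHat)
      (fun S hS => hS.addTops hhat hbasic hnu1 hnuHat)
  refine ⟨hmuHat, ?_⟩
  rw [lrCoeff, lrCoeff, if_pos hmu, if_pos hmuHat, hbij.ncard_eq]

end LRSkew
end
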